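/- arXiv:math/9810145 — 3 statements merged into one kernel-verified Lean document; each statement's English description precedes it below -/
import Mathlib

section
/- Let E ⊆ ℝⁿ be a starry set. Then E is star-shaped with respect to the origin: for every a ∈ E the segment [0, a] = {λ·a : λ ∈ [0,1]} is contained in E. -/
/-! A segment `[0, a]` leaving a closed set `E` at `l • a` would cross the frontier of `E` once
between `0` and `l • a` and once more between `l • a` and `a`, since a connected set meeting
both `E` and its complement meets its frontier. These are two distinct frontier points on the
ray through `a`, so the ray is neither contained in `E` nor meets its frontier exactly once. -/

/-- A set `E ⊆ ℝⁿ` is *starry* if it is closed, `0` belongs to its interior, and for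
every `x ≠ 0`, either the ray `L_x = {λ • x : λ ≥ 0}` is contained in `E`, or there is a
unique point of `L_x` lying in the frontier of `E`. -/
def Starry {n : ℕ} (E : Set (EuclideanSpace ℝ (Fin n))) : Prop :=
  IsClosed E ∧ (0 : EuclideanSpace ℝ (Fin n)) ∈ interior E ∧
    ∀ x : EuclideanSpace ℝ (Fin n), x ≠ 0 →
      ({u | ∃ l : ℝ, 0 ≤ l ∧ u = l • x} ⊆ E) ∨
      (∃! z : EuclideanSpace ℝ (Fin n),
        z ∈ {u | ∃ l : ℝ, 0 ≤ l ∧ u = l • x} ∧ z ∈ frontier E)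

open Set

theorem IsPreconnected.inter_frontier_nonempty {X : Type*} [TopologicalSpace X] {s t : Set X}
    (hs : IsPreconnected s) (hst : (s ∩ t).Nonempty) (hst' : (s \ t).Nonempty) :
    (s ∩ frontier t).Nonempty := by
  by_contra h
  have hcover : s ⊆ interior t ∪ (closure t)ᶜ := fun x hx => by
    by_cases hxt : x ∈ interior t
    · exact .inl hxt
    · exact .inr fun hxc => h ⟨x, hx, hxc, hxt⟩
  have hin : (s ∩ interior t).Nonempty := hst.mono fun x hx =>
    ⟨hx.1, (hcover hx.1).resolve_right (not_not.2 (subset_closure hx.2))⟩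
  have hout : (s ∩ (closure t)ᶜ).Nonempty := hst'.mono fun x hx =>
    ⟨hx.1, (hcover hx.1).resolve_left fun hi => hx.2 (interior_subset hi)⟩
  obtain ⟨x, -, hxi, hxc⟩ :=
    hs _ _ isOpen_interior isClosed_closure.isOpen_compl hcover hin hout
  exact hxc (subset_closure (interior_subset hxi))

theorem exists_smul_mem_frontier {M : Type*} [TopologicalSpace M] [AddCommGroup M] [Module ℝ M]
    [ContinuousSMul ℝ M] {C : Set M} (hC : IsClosed C) (a : M) {s t : ℝ} (hs : s • a ∈ C)
    (ht : t • a ∉ C) : ∃ r ∈ uIcc s t, r ≠ t ∧ r • a ∈ frontier C := by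
  have hconn : IsPreconnected ((· • a) '' uIcc s t) :=
    isPreconnected_uIcc.image _ (continuous_id.smul continuous_const).continuousOn
  obtain ⟨_, ⟨r, hr, rfl⟩, hrC⟩ := hconn.inter_frontier_nonempty
    ⟨s • a, mem_image_of_mem _ left_mem_uIcc, hs⟩ ⟨t • a, mem_image_of_mem _ right_mem_uIcc, ht⟩
  exact ⟨r, hr, by rintro rfl; exact ht (hC.frontier_subset hrC), hrC⟩

theorem stmt_1 {n : ℕ} (E : Set (EuclideanSpace ℝ (Fin n))) (hE : Starry E) :
    ∀ a ∈ E, ∀ l : ℝ, l ∈ Set.Icc (0 : ℝ) 1 → l • a ∈ E := by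
  obtain ⟨hcl, h0, hray⟩ := hE
  intro a ha l ⟨hl0, hl1⟩
  by_contra hla
  have h0a : (0 : ℝ) • a ∈ E := by simpa using interior_subset h0
  have ha0 : a ≠ 0 := by rintro rfl; exact hla (by simpa using h0a)
  obtain ⟨r, ⟨hr0, hrl⟩, hrl', hrF⟩ := uIcc_of_le hl0 ▸ exists_smul_mem_frontier hcl a h0a hla
  obtain ⟨r', ⟨hr'l, -⟩, -, hr'F⟩ :=
    uIcc_of_ge hl1 ▸ exists_smul_mem_frontier hcl a (by simpa using ha) hla
  rcases hray a ha0 with hsub | ⟨z, -, huniq⟩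
  · exact hla (hsub ⟨l, hl0, rfl⟩)
  have hrr' : r • a = r' • a :=
    (huniq _ ⟨⟨r, hr0, rfl⟩, hrF⟩).trans (huniq _ ⟨⟨r', hl0.trans hr'l, rfl⟩, hr'F⟩).symm
  have hrr : r = r' := smul_left_injective ℝ ha0 hrr'
  exact hrl' (le_antisymm hrl (hr'l.trans_eq hrr.symm))
end

section
/- Let A : ℝ → Matrix(n, n, ℝ) be continuous on [t₀, T] (t₀ ≤ T), let X : ℝ → Matrix(n, n, ℝ) be the fundamental matrix of the linear system dx/dt = A(t)x normalized at t₀, i.e. X'(t) = A(t)·X(t) for t ∈ [t₀, T] and X(t₀) = I, with X(t) invertible for all t ∈ [t₀, T]. Let l_1, …, l_N : ℝ → ℝⁿ be continuous on [t₀, T] with l_s(t) ≠ 0 for all s and t, and define Γ_t = {x ∈ ℝⁿ : |l_s(t)ᵀ x| ≤ 1 for s = 1, …, N}. Let z₀ ∈ ℝⁿ, c > 0, and set H(t) = X(t)·X(t)ᵀ, c* = min over t ∈ [t₀, T] and s = 1, …, N of (1 − |l_s(t)ᵀ X(t) z₀|) / √(l_s(t)ᵀ H(t) l_s(t)) (the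 minimum exists by continuity and compactness). Then the trivial solution of the linear system is {K_c(z₀), Γ_t, t₀, T}-stable — i.e. for every x₀ with ‖x₀ − z₀‖ ≤ c and every t ∈ [t₀, T], X(t)·x₀ ∈ Γ_t — if and only if c ≤ c*. -/
open scoped RealInnerProductSpace Matrix

lemma aux_inner_trans {n : ℕ} (M : Matrix (Fin n) (Fin n) ℝ) (x y : EuclideanSpace ℝ (Fin n)) :
    ⟪x, Matrix.toEuclideanLin M y⟫ = ⟪Matrix.toEuclideanLin Mᵀ x, y⟫ := by
  simp only [Matrix.toEuclideanLin_apply, PiLp.inner_apply, RCLike.inner_apply,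
    starRingEnd_apply, star_trivial,
    Matrix.mulVec, dotProduct, Matrix.transpose_apply, Finset.mul_sum, Finset.sum_mul]
  rw [Finset.sum_comm]
  congr 1; ext i; congr 1; ext j; ring

lemma aux_mul_apply {n : ℕ} (M P : Matrix (Fin n) (Fin n) ℝ) (x : EuclideanSpace ℝ (Fin n)) :
    Matrix.toEuclideanLin (M * P) x = Matrix.toEuclideanLin M (Matrix.toEuclideanLin P x) := by
  simp [Matrix.toEuclideanLin_apply, Matrix.mulVec_mulVec]

lemma aux_ne_zero {n : ℕ} (M : Matrix (Fin n) (Fin n) ℝ) (hM : IsUnit M)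
    (x : EuclideanSpace ℝ (Fin n)) (hx : x ≠ 0) : Matrix.toEuclideanLin Mᵀ x ≠ 0 := by
  intro h
  apply hx
  rw [Matrix.toEuclideanLin_apply] at h
  have hdet : IsUnit (Mᵀ).det := by
    simpa [Matrix.det_transpose] using hM.map Matrix.detMonoidHom
  have h' : Mᵀ *ᵥ (WithLp.equiv 2 (Fin n → ℝ)) x = 0 := by
    simpa using congrArg (WithLp.equiv 2 (Fin n → ℝ)) h
  have h2 : (WithLp.equiv 2 (Fin n → ℝ)) x = 0 := by
    have := congrArg (fun v => (Mᵀ)⁻¹ *ᵥ v) h'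
    simpa [Matrix.mulVec_mulVec, Matrix.nonsing_inv_mul _ hdet] using this
  simpa using congrArg (WithLp.equiv 2 (Fin n → ℝ)).symm h2

theorem stmt_13 {n N : ℕ} (t₀ T : ℝ) (ht : t₀ ≤ T)
    (A : ℝ → Matrix (Fin n) (Fin n) ℝ) (hA : ContinuousOn A (Set.Icc t₀ T))
    (X : ℝ → Matrix (Fin n) (Fin n) ℝ)
    (hXode : ∀ t ∈ Set.Icc t₀ T, ∀ i j : Fin n,
      HasDerivAt (fun s => X s i j) ((A t * X t) i j) t)
    (hX0 : X t₀ = 1)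
    (hXinv : ∀ t ∈ Set.Icc t₀ T, IsUnit (X t))
    (l : Fin N → ℝ → EuclideanSpace ℝ (Fin n))
    (hlcont : ∀ s : Fin N, ContinuousOn (l s) (Set.Icc t₀ T))
    (hlne : ∀ s : Fin N, ∀ t ∈ Set.Icc t₀ T, l s t ≠ 0)
    (z₀ : EuclideanSpace ℝ (Fin n)) (c : ℝ) (hc : 0 < c)
    (H : ℝ → Matrix (Fin n) (Fin n) ℝ) (hH : ∀ t, H t = X t * (X t)ᵀ)
    (cstar : ℝ)
    (hcstar : IsLeast {v : ℝ | ∃ t ∈ Set.Icc t₀ T, ∃ s : Fin N,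
      v = (1 - |⟪l s t, Matrix.toEuclideanLin (X t) z₀⟫|) /
          Real.sqrt ⟪l s t, Matrix.toEuclideanLin (H t) (l s t)⟫} cstar) :
    (∀ x₀ : EuclideanSpace ℝ (Fin n), ‖x₀ - z₀‖ ≤ c →
      ∀ t ∈ Set.Icc t₀ T, ∀ s : Fin N,
        |⟪l s t, Matrix.toEuclideanLin (X t) x₀⟫| ≤ 1) ↔ c ≤ cstar := by
  -- Notation: for t ∈ [t₀,T] and s, let v = Xᵀ l.
  -- Key rewriting facts, for t ∈ Icc and any s:
  have hvne : ∀ t ∈ Set.Icc t₀ T, ∀ s : Fin N,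
      Matrix.toEuclideanLin (X t)ᵀ (l s t) ≠ 0 := fun t htm s =>
    aux_ne_zero _ (hXinv t htm) _ (hlne s t htm)
  have hvpos : ∀ t ∈ Set.Icc t₀ T, ∀ s : Fin N,
      0 < ‖Matrix.toEuclideanLin (X t)ᵀ (l s t)‖ := fun t htm s =>
    norm_pos_iff.mpr (hvne t htm s)
  have hsqrt : ∀ t, ∀ s : Fin N,
      Real.sqrt ⟪l s t, Matrix.toEuclideanLin (H t) (l s t)⟫ =
        ‖Matrix.toEuclideanLin (X t)ᵀ (l s t)‖ := by
    intro t s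
    have : ⟪l s t, Matrix.toEuclideanLin (H t) (l s t)⟫ =
        ‖Matrix.toEuclideanLin (X t)ᵀ (l s t)‖ ^ 2 := by
      rw [hH, aux_mul_apply, aux_inner_trans, real_inner_self_eq_norm_sq]
    rw [this, Real.sqrt_sq (norm_nonneg _)]
  have hinnerx : ∀ t, ∀ s : Fin N, ∀ x : EuclideanSpace ℝ (Fin n),
      ⟪l s t, Matrix.toEuclideanLin (X t) x⟫ =
        ⟪Matrix.toEuclideanLin (X t)ᵀ (l s t), x⟫ := fun t s x => aux_inner_trans _ _ _
  constructor
  · -- stability → c ≤ cstar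
    intro hstab
    obtain ⟨t, htm, s, hs⟩ := hcstar.1
    set v : EuclideanSpace ℝ (Fin n) := Matrix.toEuclideanLin (X t)ᵀ (l s t) with hv
    have hnv : 0 < ‖v‖ := hvpos t htm s
    set a : ℝ := ⟪v, z₀⟫ with ha
    set ε : ℝ := if 0 ≤ a then 1 else -1 with hε
    set x₀ : EuclideanSpace ℝ (Fin n) := z₀ + (ε * c / ‖v‖) • v with hx₀
    have habs : |ε| = 1 := by
      rcases le_or_gt 0 a with h | h
      · simp [hε, if_pos h]
      · simp [hε, if_neg (not_le.mpr h)]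
    have hdist : ‖x₀ - z₀‖ ≤ c := by
      rw [hx₀, add_sub_cancel_left, norm_smul, Real.norm_eq_abs, abs_div, abs_mul, habs,
        one_mul, abs_of_pos hc, abs_norm, div_mul_cancel₀ _ (ne_of_gt hnv)]
    have hb := hstab x₀ hdist t htm s
    rw [hinnerx] at hb
    have hval : ⟪v, x₀⟫ = a + ε * (c * ‖v‖) := by
      rw [hx₀, inner_add_right, real_inner_smul_right, real_inner_self_eq_norm_sq, ← ha]
      field_simp
    have habs2 : |⟪v, x₀⟫| = |a| + c * ‖v‖ := by
      rw [hval]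
      rcases le_or_gt 0 a with h | h
      · rw [hε, if_pos h, one_mul, abs_of_nonneg h,
          abs_of_nonneg (by positivity : (0:ℝ) ≤ a + c * ‖v‖)]
      · rw [hε, if_neg (not_le.mpr h), abs_of_neg h, neg_one_mul]
        have : a - c * ‖v‖ < 0 := by nlinarith [mul_pos hc hnv]
        rw [show a + -(c * ‖v‖) = a - c * ‖v‖ by ring, abs_of_neg this]
        ring
    have hkey : c * ‖v‖ ≤ 1 - |a| := by
      have := habs2 ▸ hb
      linarith
    rw [hs, hsqrt t s, hinnerx, ← hv, ← ha]
    rw [le_div_iff₀ hnv]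
    exact hkey
  · -- c ≤ cstar → stability
    intro hle x₀ hx₀ t htm s
    set v : EuclideanSpace ℝ (Fin n) := Matrix.toEuclideanLin (X t)ᵀ (l s t) with hv
    have hnv : 0 < ‖v‖ := hvpos t htm s
    have hmem : (1 - |⟪l s t, Matrix.toEuclideanLin (X t) z₀⟫|) /
        Real.sqrt ⟪l s t, Matrix.toEuclideanLin (H t) (l s t)⟫ ∈
        {w : ℝ | ∃ t ∈ Set.Icc t₀ T, ∃ s : Fin N,
          w = (1 - |⟪l s t, Matrix.toEuclideanLin (X t) z₀⟫|) /
            Real.sqrt ⟪l s t, Matrix.toEuclideanLin (H t) (l s t)⟫} := ⟨t, htm, s, rfl⟩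
    have h1 : c ≤ (1 - |⟪v, z₀⟫|) / ‖v‖ := by
      have := le_trans hle (hcstar.2 hmem)
      rwa [hsqrt t s, hinnerx, ← hv] at this
    have hkey : c * ‖v‖ ≤ 1 - |⟪v, z₀⟫| := (le_div_iff₀ hnv).mp h1
    rw [hinnerx, ← hv]
    have : ⟪v, x₀⟫ = ⟪v, z₀⟫ + ⟪v, x₀ - z₀⟫ := by
      rw [← inner_add_right]; congr 1; abel
    rw [this]
    calc |⟪v, z₀⟫ + ⟪v, x₀ - z₀⟫| ≤ |⟪v, z₀⟫| + |⟪v, x₀ - z₀⟫| := abs_add_le _ _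
      _ ≤ |⟪v, z₀⟫| + ‖v‖ * ‖x₀ - z₀‖ := by
          gcongr; exact abs_real_inner_le_norm _ _
      _ ≤ |⟪v, z₀⟫| + ‖v‖ * c := by gcongr
      _ ≤ 1 := by nlinarith
end

section
/- Let A : ℝ → Matrix(n, n, ℝ) be continuous on [t₀, T] (t₀ ≤ T), let X : ℝ → Matrix(n, n, ℝ) satisfy X'(t) = A(t)·X(t) on [t₀, T], X(t₀) = I, with X(t) invertible for all t ∈ [t₀, T]. Let l_1, …, l_N : ℝ → ℝⁿ be continuous with l_s(t) ≠ 0 for all s, t, and Γ_t = {x ∈ ℝⁿ : |l_s(t)ᵀ x| ≤ 1, s = 1, …, N}. Let Q be a symmetric positive definite n × n matrix, z₀ ∈ ℝⁿ, c > 0, K̂_c(z₀) = {x ∈ ℝⁿ : (x − z₀)ᵀ Q (x − z₀) ≤ c²}, H(t) = X(t)·Q⁻¹·X(t)ᵀ, and c* = min over t ∈ [t₀, T] and s = 1, …, N of (1 − |l_s(t)ᵀ X(t) z₀|) / √(l_s(t)ᵀ H(t) l_s(t)). Then the trivial solution of the linear system dx/dt = A(t)x is {K̂_c(z₀), Γ_t,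 t₀, T}-stable — i.e. X(t)·x₀ ∈ Γ_t for every x₀ ∈ K̂_c(z₀) and every t ∈ [t₀, T] — if and only if c ≤ c*. -/
open scoped RealInnerProductSpace Matrix

private lemma dot_cs {n : ℕ} (u v : Fin n → ℝ) :
    (u ⬝ᵥ v) ^ 2 ≤ (u ⬝ᵥ u) * (v ⬝ᵥ v) := by
  have h := Finset.sum_mul_sq_le_sq_mul_sq Finset.univ u v
  simpa [dotProduct, sq] using h

private lemma psd_cs {n : ℕ} {M : Matrix (Fin n) (Fin n) ℝ} (hM : M.PosSemidef)
    (x y : Fin n → ℝ) : (x ⬝ᵥ M *ᵥ y) ^ 2 ≤ (x ⬝ᵥ M *ᵥ x) * (y ⬝ᵥ M *ᵥ y) := by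
  have hsym : Mᵀ = M := by
    have := hM.1
    rwa [Matrix.IsHermitian, Matrix.conjTranspose_eq_transpose_of_trivial] at this
  have hs : ∀ a b : Fin n → ℝ, a ⬝ᵥ M *ᵥ b = b ⬝ᵥ M *ᵥ a := by
    intro a b
    rw [Matrix.dotProduct_mulVec, ← Matrix.mulVec_transpose, hsym, dotProduct_comm]
  have hnn : ∀ r : ℝ, 0 ≤ (y ⬝ᵥ M *ᵥ y) * (r * r) + (2 * (x ⬝ᵥ M *ᵥ y)) * r
      + (x ⬝ᵥ M *ᵥ x) := by
    intro r
    have h := hM.dotProduct_mulVec_nonneg (x + r • y)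
    simp only [star_trivial, Matrix.mulVec_add, Matrix.mulVec_smul, dotProduct_add,
      add_dotProduct, dotProduct_smul, smul_dotProduct, smul_eq_mul] at h
    rw [hs y x] at h
    nlinarith
  have hd := discrim_le_zero hnn
  unfold discrim at hd
  nlinarith

private lemma key {n : ℕ} {Q : Matrix (Fin n) (Fin n) ℝ} (hQ : Q.PosDef)
    {a : Fin n → ℝ} (ha : a ≠ 0) (z : Fin n → ℝ) {c : ℝ} (hc : 0 < c) :
    (∀ x : Fin n → ℝ, (x - z) ⬝ᵥ Q *ᵥ (x - z) ≤ c ^ 2 → |a ⬝ᵥ x| ≤ 1) ↔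
      |a ⬝ᵥ z| + c * Real.sqrt (a ⬝ᵥ Q⁻¹ *ᵥ a) ≤ 1 := by
  have hQt : Qᵀ = Q := by
    have h := hQ.isHermitian
    rwa [Matrix.IsHermitian, Matrix.conjTranspose_eq_transpose_of_trivial] at h
  have hdet : IsUnit Q.det := hQ.det_pos.ne'.isUnit
  set d := a ⬝ᵥ Q⁻¹ *ᵥ a with hd
  have hdpos : 0 < d := by simpa using hQ.inv.dotProduct_mulVec_pos ha
  set w : Fin n → ℝ := Q⁻¹ *ᵥ a with hw
  have hQw : Q *ᵥ w = a := by
    rw [hw, Matrix.mulVec_mulVec, Matrix.mul_nonsing_inv _ hdet, Matrix.one_mulVec]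
  have haw : a ⬝ᵥ w = d := rfl
  have hwQw : w ⬝ᵥ Q *ᵥ w = d := by rw [hQw, dotProduct_comm]
  have hsd : Real.sqrt d ^ 2 = d := Real.sq_sqrt hdpos.le
  have hsdpos : 0 < Real.sqrt d := Real.sqrt_pos.mpr hdpos
  constructor
  · intro h
    set sgn : ℝ := if 0 ≤ a ⬝ᵥ z then 1 else -1 with hsgn
    have hsgn2 : sgn ^ 2 = 1 := by
      rcases le_or_gt 0 (a ⬝ᵥ z) with h' | h'
      · simp [hsgn, h']
      · simp [hsgn, h'.not_ge]
    set x : Fin n → ℝ := z + (sgn * (c / Real.sqrt d)) • w with hx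
    have hx1 : x - z = (sgn * (c / Real.sqrt d)) • w := by rw [hx]; abel
    have hcond : (x - z) ⬝ᵥ Q *ᵥ (x - z) ≤ c ^ 2 := by
      rw [hx1, smul_dotProduct, Matrix.mulVec_smul, dotProduct_smul,
        hwQw, smul_eq_mul, smul_eq_mul]
      have e : sgn * (c / Real.sqrt d) * (sgn * (c / Real.sqrt d) * d)
          = sgn ^ 2 * c ^ 2 * (d / Real.sqrt d ^ 2) := by ring
      rw [e, hsgn2, hsd, div_self hdpos.ne']
      simp
    have hax : a ⬝ᵥ x = a ⬝ᵥ z + sgn * (c * Real.sqrt d) := by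
      rw [hx, dotProduct_add, dotProduct_smul, haw, smul_eq_mul]
      have : c / Real.sqrt d * d = c * Real.sqrt d := by
        rw [div_mul_eq_mul_div, mul_div_assoc, Real.div_sqrt]
      rw [mul_assoc, this]
    have h1 := h x hcond
    rw [hax] at h1
    have hcd : 0 ≤ c * Real.sqrt d := by positivity
    rcases le_or_gt 0 (a ⬝ᵥ z) with h' | h'
    · rw [hsgn, if_pos h', one_mul] at h1
      rw [abs_of_nonneg (by linarith)] at h1
      rw [abs_of_nonneg h']
      linarith
    · rw [hsgn, if_neg (not_le.mpr h'), neg_one_mul] at h1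
      rw [abs_of_nonpos (by linarith)] at h1
      rw [abs_of_neg h']
      linarith
  · intro hb x hx
    have hau : ∀ u : Fin n → ℝ, a ⬝ᵥ u = w ⬝ᵥ Q *ᵥ u := by
      intro u
      conv_rhs => rw [Matrix.dotProduct_mulVec, ← Matrix.mulVec_transpose, hQt, hQw]
    have hcs := psd_cs hQ.posSemidef w (x - z)
    rw [hwQw, ← hau] at hcs
    have h1 : (a ⬝ᵥ (x - z)) ^ 2 ≤ (c * Real.sqrt d) ^ 2 := by
      have h2 : d * ((x - z) ⬝ᵥ Q *ᵥ (x - z)) ≤ d * c ^ 2 :=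
        mul_le_mul_of_nonneg_left hx hdpos.le
      have h3 : (c * Real.sqrt d) ^ 2 = d * c ^ 2 := by rw [mul_pow, hsd]; ring
      rw [h3]; exact hcs.trans h2
    have h2 : |a ⬝ᵥ (x - z)| ≤ c * Real.sqrt d := by
      have := Real.sqrt_le_sqrt h1
      rwa [Real.sqrt_sq_eq_abs, Real.sqrt_sq (by positivity)] at this
    have h3 : a ⬝ᵥ (x - z) = a ⬝ᵥ x - a ⬝ᵥ z := dotProduct_sub a x z
    have h4 : |a ⬝ᵥ x| ≤ |a ⬝ᵥ z| + |a ⬝ᵥ (x - z)| := by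
      rw [h3]
      calc |a ⬝ᵥ x| = |a ⬝ᵥ z + (a ⬝ᵥ x - a ⬝ᵥ z)| := by ring_nf
        _ ≤ _ := abs_add_le _ _
    linarith

theorem stmt_16 {n N : ℕ} (t₀ T : ℝ) (ht : t₀ ≤ T)
    (A : ℝ → Matrix (Fin n) (Fin n) ℝ) (hA : ContinuousOn A (Set.Icc t₀ T))
    (X : ℝ → Matrix (Fin n) (Fin n) ℝ)
    (hXode : ∀ t ∈ Set.Icc t₀ T, ∀ i j : Fin n,
      HasDerivAt (fun s => X s i j) ((A t * X t) i j) t)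
    (hX0 : X t₀ = 1)
    (hXinv : ∀ t ∈ Set.Icc t₀ T, IsUnit (X t))
    (l : Fin N → ℝ → EuclideanSpace ℝ (Fin n))
    (hlcont : ∀ s : Fin N, ContinuousOn (l s) (Set.Icc t₀ T))
    (hlne : ∀ s : Fin N, ∀ t ∈ Set.Icc t₀ T, l s t ≠ 0)
    (Q : Matrix (Fin n) (Fin n) ℝ) (hQ : Q.PosDef) (hQsymm : Qᵀ = Q)
    (z₀ : EuclideanSpace ℝ (Fin n)) (c : ℝ) (hc : 0 < c)
    (H : ℝ → Matrix (Fin n) (Fin n) ℝ) (hH : ∀ t, H t = X t * Q⁻¹ * (X t)ᵀ)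
    (cstar : ℝ)
    (hcstar : IsLeast {v : ℝ | ∃ t ∈ Set.Icc t₀ T, ∃ s : Fin N,
      v = (1 - |⟪l s t, Matrix.toEuclideanLin (X t) z₀⟫|) /
          Real.sqrt ⟪l s t, Matrix.toEuclideanLin (H t) (l s t)⟫} cstar) :
    (∀ x₀ : EuclideanSpace ℝ (Fin n),
      ⟪x₀ - z₀, Matrix.toEuclideanLin Q (x₀ - z₀)⟫ ≤ c ^ 2 →
      ∀ t ∈ Set.Icc t₀ T, ∀ s : Fin N,
        |⟪l s t, Matrix.toEuclideanLin (X t) x₀⟫| ≤ 1) ↔ c ≤ cstar := by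
  classical
  have hInner : ∀ (M : Matrix (Fin n) (Fin n) ℝ) (u v : EuclideanSpace ℝ (Fin n)),
      ⟪u, Matrix.toEuclideanLin M v⟫ =
        (WithLp.equiv 2 (Fin n → ℝ) u) ⬝ᵥ (M *ᵥ (WithLp.equiv 2 (Fin n → ℝ) v)) := by
    intro M u v
    simp [PiLp.inner_apply, Matrix.toEuclideanLin_apply, dotProduct,
      RCLike.inner_apply, mul_comm]
  set e := WithLp.equiv 2 (Fin n → ℝ) with he
  set af : ℝ → Fin N → Fin n → ℝ := fun t s => (X t)ᵀ *ᵥ (e (l s t)) with haf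
  have ha : ∀ t ∈ Set.Icc t₀ T, ∀ s, af t s ≠ 0 := by
    intro t ht' s h0
    have hdet : IsUnit (X t).det := (Matrix.isUnit_iff_isUnit_det _).mp (hXinv t ht')
    have h1 : ((X t)⁻¹)ᵀ *ᵥ ((X t)ᵀ *ᵥ (e (l s t))) = e (l s t) := by
      rw [Matrix.mulVec_mulVec, ← Matrix.transpose_mul,
        Matrix.mul_nonsing_inv _ hdet, Matrix.transpose_one, Matrix.one_mulVec]
    have h0' : (X t)ᵀ *ᵥ (e (l s t)) = 0 := h0
    rw [h0', Matrix.mulVec_zero] at h1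
    exact hlne s t ht' (e.injective (by rw [← h1]; rfl))
  have hE1 : ∀ t s (v : EuclideanSpace ℝ (Fin n)),
      ⟪l s t, Matrix.toEuclideanLin (X t) v⟫ = af t s ⬝ᵥ (e v) := by
    intro t s v
    rw [hInner, Matrix.dotProduct_mulVec, ← Matrix.mulVec_transpose]
  have hE2 : ∀ t s, ⟪l s t, Matrix.toEuclideanLin (H t) (l s t)⟫
      = af t s ⬝ᵥ Q⁻¹ *ᵥ af t s := by
    intro t s
    rw [hInner, hH, ← Matrix.mulVec_mulVec, ← Matrix.mulVec_mulVec,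
      Matrix.dotProduct_mulVec, ← Matrix.mulVec_transpose]
  set val : ℝ → Fin N → ℝ := fun t s =>
    (1 - |af t s ⬝ᵥ e z₀|) / Real.sqrt (af t s ⬝ᵥ Q⁻¹ *ᵥ af t s) with hvald
  have hvaleq : ∀ t s,
      (1 - |⟪l s t, Matrix.toEuclideanLin (X t) z₀⟫|) /
        Real.sqrt ⟪l s t, Matrix.toEuclideanLin (H t) (l s t)⟫ = val t s := by
    intro t s; rw [hE1, hE2]
  have hiff : ∀ t ∈ Set.Icc t₀ T, ∀ s,
      ((∀ x : Fin n → ℝ, (x - e z₀) ⬝ᵥ Q *ᵥ (x - e z₀) ≤ c ^ 2 →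
        |af t s ⬝ᵥ x| ≤ 1) ↔ c ≤ val t s) := by
    intro t ht' s
    have hdpos : 0 < af t s ⬝ᵥ Q⁻¹ *ᵥ af t s := by
      simpa using hQ.inv.dotProduct_mulVec_pos (ha t ht' s)
    have hsdpos : 0 < Real.sqrt (af t s ⬝ᵥ Q⁻¹ *ᵥ af t s) := Real.sqrt_pos.mpr hdpos
    rw [key hQ (ha t ht' s) (e z₀) hc, hvald]
    rw [le_div_iff₀ hsdpos]
    constructor <;> intro <;> linarith
  constructor
  · intro hstab
    obtain ⟨t, ht', s, hv⟩ := hcstar.1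
    rw [hv, hvaleq t s]
    refine (hiff t ht' s).mp ?_
    intro x hx
    have hcond : ⟪e.symm x - z₀, Matrix.toEuclideanLin Q (e.symm x - z₀)⟫ ≤ c ^ 2 := by
      rw [hInner]
      have hsub : e (e.symm x - z₀) = x - e z₀ := by
        rw [show e (e.symm x - z₀) = e (e.symm x) - e z₀ from rfl, e.apply_symm_apply]
      rw [hsub]
      exact hx
    have hs := hstab (e.symm x) hcond t ht' s
    rw [hE1] at hs
    rwa [e.apply_symm_apply] at hs
  · intro hcle x₀ hx₀ t ht' s
    have hv : c ≤ val t s := hcle.trans (hcstar.2 ⟨t, ht', s, (hvaleq t s).symm⟩)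
    have hcond : (e x₀ - e z₀) ⬝ᵥ Q *ᵥ (e x₀ - e z₀) ≤ c ^ 2 := by
      rw [hInner] at hx₀
      exact hx₀
    have := (hiff t ht' s).mpr hv (e x₀) hcond
    rwa [hE1]
end
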